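/- Let s and t be vertices of the d-dimensional Boolean hypercube Q_d at graph distance r, and let P_1 and P_2 be two s–t shortest paths with flip sequences π_1 and π_2. Then P_1 and P_2 are reconfigurable, and the minimum number of reconfiguration steps needed to transform P_1 into P_2 equals the Kendall tau distance between π_1 and π_2, i.e., the number of pairs {a, b} of coordinates whose relative order in π_1 differs from their relative order in π_2. -/

import Mathlib

/-- The `d`-dimensional Boolean hypercube: vertices are `Fin d → Bool`, adjacent iff
they differ in exactly one coordinate. -/
def cube (d : ℕ) : SimpleGraph (Fin d → Bool) where
  Adj x y := (Finset.univ.filter fun i => x i ≠ y i).card = 1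
  symm := by
    constructor
    intro x y h
    have hset : (Finset.univ.filter fun i => y i ≠ x i)
        = (Finset.univ.filter fun i => x i ≠ y i) :=
      Finset.filter_congr (fun i _ => by exact ne_comm)
    rw [hset]; exact h
  loopless := by constructor; intro x h; simp at h

/-- The flip sequence of a walk in the hypercube: the list whose `i`-th entry is the
coordinate flipped at the `i`-th step. -/
def flipSeq {d : ℕ} : {x y : Fin d → Bool} → (cube d).Walk x y → List (Fin d)
  | _, _, SimpleGraph.Walk.nil => []
  | x, _, @SimpleGraph.Walk.cons _ _ _ z _ h p =>
      (Finset.univ.filter fun i => x i ≠ z i).min'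
        (Finset.card_pos.mp (by have hc : (Finset.univ.filter fun i => x i ≠ z i).card = 1 := h; omega))
        :: flipSeq p

/-- Two lists (vertex sequences) differ in exactly one position. -/
def OneStep {α : Type*} (l₁ l₂ : List α) : Prop :=
  l₁.length = l₂.length ∧ ∃ i : ℕ, l₁[i]? ≠ l₂[i]? ∧ ∀ j, j ≠ i → l₁[j]? = l₂[j]?

/-- One reconfiguration step between `s`–`t` shortest paths: both walks are shortest
and their vertex sequences differ in exactly one position. -/
def ShortestStep {V : Type*} (G : SimpleGraph V) (s t : V) (p q : G.Walk s t) : Prop :=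
  p.length = G.dist s t ∧ q.length = G.dist s t ∧ OneStep p.support q.support

/-- Two `s`–`t` shortest paths are reconfigurable if they are joined by a sequence of
`s`–`t` shortest paths in which consecutive paths differ in exactly one position. -/
def Reconfigurable {V : Type*} (G : SimpleGraph V) (s t : V) (p q : G.Walk s t) : Prop :=
  Relation.ReflTransGen (ShortestStep G s t) p q

/-- The minimum number of reconfiguration steps needed to transform one `s`–`t`
shortest path into another (through `s`–`t` shortest paths). -/
noncomputable def reconfDist {V : Type*} (G : SimpleGraph V) (s t : V)
    (P Q : G.Walk s t) : ℕ :=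
  sInf {n : ℕ | ∃ f : ℕ → G.Walk s t, f 0 = P ∧ f n = Q ∧
    (∀ i ≤ n, (f i).length = G.dist s t) ∧
    ∀ i < n, OneStep (f i).support (f (i + 1)).support}

/-- The Kendall tau distance between two lists of coordinates: the number of pairs
`{a, b}` whose relative order in the first list differs from that in the second. -/
def kendallTau {d : ℕ} (l₁ l₂ : List (Fin d)) : ℕ :=
  ((Finset.univ : Finset (Fin d × Fin d)).filter fun p =>
    p.1 < p.2 ∧
      ¬((l₁.idxOf p.1 < l₁.idxOf p.2) ↔ (l₂.idxOf p.1 < l₂.idxOf p.2))).card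

/-!
A shortest `s`–`t` path flips every coordinate in which `s` and `t` differ exactly once, so it
is determined by its flip sequence, a permutation of these coordinates. Two shortest paths differ
in exactly one vertex iff their flip sequences differ by a transposition of adjacent entries.
Such a transposition changes the Kendall tau distance to a fixed target sequence by exactly one,
and, as in bubble sort, unless the two sequences coincide some adjacent transposition decreases
it. So the Kendall tau distance to the target path is a potential that drops by at most one per
reconfiguration step and can always drop by one, hence equals the reconfiguration distance.
-/

namespace SimpleGraph

variable {V : Type*} {G : SimpleGraph V} {s t : V}

def IsReconfSeq (G : SimpleGraph V) (s t : V) (f : ℕ → G.Walk s t) (n : ℕ) : Prop :=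
  (∀ i ≤ n, (f i).length = G.dist s t) ∧ ∀ i < n, OneStep (f i).support (f (i + 1)).support

lemma IsReconfSeq.reconfigurable {f : ℕ → G.Walk s t} {n : ℕ} (hf : IsReconfSeq G s t f n) :
    Reconfigurable G s t (f 0) (f n) := by
  suffices ∀ i ≤ n, Reconfigurable G s t (f 0) (f i) from this n le_rfl
  intro i
  induction i with
  | zero => exact fun _ => Relation.ReflTransGen.refl
  | succ i ih =>
    intro hi
    exact (ih (by omega)).tail ⟨hf.1 i (by omega), hf.1 (i + 1) hi, hf.2 i hi⟩

lemma IsReconfSeq.potential_le {Φ : G.Walk s t → ℕ}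
    (hΦ : ∀ p q, ShortestStep G s t p q → Φ p ≤ Φ q + 1)
    {f : ℕ → G.Walk s t} {n : ℕ} (hf : IsReconfSeq G s t f n) :
    Φ (f 0) ≤ Φ (f n) + n := by
  suffices ∀ i ≤ n, Φ (f 0) ≤ Φ (f i) + i from this n le_rfl
  intro i
  induction i with
  | zero => exact fun _ => le_rfl
  | succ i ih =>
    intro hi
    have := hΦ _ _ ⟨hf.1 i (by omega), hf.1 (i + 1) hi, hf.2 i hi⟩
    have := ih (by omega)
    omega

lemma exists_isReconfSeq_of_forall_exists_step {Q : G.Walk s t} {Φ : G.Walk s t → ℕ}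
    (hQ : Φ Q = 0) (hstep : ∀ p : G.Walk s t, p.length = G.dist s t → p ≠ Q →
      ∃ q, ShortestStep G s t p q ∧ Φ p = Φ q + 1)
    (P : G.Walk s t) (hP : P.length = G.dist s t) :
    ∃ f : ℕ → G.Walk s t, f 0 = P ∧ f (Φ P) = Q ∧ IsReconfSeq G s t f (Φ P) := by
  induction hn : Φ P generalizing P with
  | zero =>
    have hPQ : P = Q := by
      by_contra hne
      obtain ⟨q, -, hq⟩ := hstep P hP hne
      omega
    exact ⟨fun _ => P, rfl, hPQ, fun _ _ => hP, by omega⟩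
  | succ n ih =>
    have hne : P ≠ Q := by
      rintro rfl
      omega
    obtain ⟨q, hPq, hq⟩ := hstep P hP hne
    obtain ⟨f, hf0, hfn, hf⟩ := ih q hPq.2.1 (by omega)
    refine ⟨fun | 0 => P | i + 1 => f i, rfl, hfn, ?_, ?_⟩
    · rintro (_ | i) hi
      exacts [hP, hf.1 i (by omega)]
    · rintro (_ | i) hi
      · simpa [hf0] using hPq.2.2
      · exact hf.2 i (by omega)

theorem reconfigurable_and_reconfDist_eq_of_potential {P Q : G.Walk s t} (Φ : G.Walk s t → ℕ)
    (hP : P.length = G.dist s t) (hQ : Φ Q = 0)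
    (hΦ : ∀ p q, ShortestStep G s t p q → Φ p ≤ Φ q + 1)
    (hstep : ∀ p : G.Walk s t, p.length = G.dist s t → p ≠ Q →
      ∃ q, ShortestStep G s t p q ∧ Φ p = Φ q + 1) :
    Reconfigurable G s t P Q ∧ reconfDist G s t P Q = Φ P := by
  obtain ⟨f, hf0, hfn, hf⟩ := exists_isReconfSeq_of_forall_exists_step hQ hstep P hP
  refine ⟨hf0 ▸ hfn ▸ hf.reconfigurable, le_antisymm (Nat.sInf_le ⟨f, hf0, hfn, hf⟩) ?_⟩
  refine le_csInf ⟨_, f, hf0, hfn, hf⟩ ?_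
  rintro n ⟨g, hg0, hgn, hg⟩
  simpa [hg0, hgn, hQ] using IsReconfSeq.potential_le hΦ hg

end SimpleGraph

namespace OneStep

variable {α : Type*} {c c' : α} {u v : List α}

lemma irrefl (l : List α) : ¬OneStep l l := fun ⟨_, _, hne, _⟩ => hne rfl

lemma cons (h : OneStep u v) (c : α) : OneStep (c :: u) (c :: v) := by
  obtain ⟨hlen, i, hne, hall⟩ := h
  refine ⟨by simp [hlen], i + 1, by simpa using hne, ?_⟩
  rintro (_ | j) hj
  · rfl
  · simpa using hall j (by omega)

lemma of_cons (h : OneStep (c :: u) (c :: v)) : OneStep u v := by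
  obtain ⟨hlen, i, hne, hall⟩ := h
  obtain _ | i := i
  · exact absurd rfl hne
  refine ⟨by simpa using hlen, i, by simpa using hne, fun j hj => ?_⟩
  simpa using hall (j + 1) (by omega)

lemma cons_of_ne (hc : c ≠ c') (u : List α) : OneStep (c :: u) (c' :: u) := by
  refine ⟨rfl, 0, by simpa using hc, ?_⟩
  rintro (_ | j) hj
  · exact absurd rfl hj
  · rfl

lemma tail_eq_of_ne (h : OneStep (c :: u) (c' :: v)) (hc : c ≠ c') : u = v := by
  obtain ⟨-, i, -, hall⟩ := h
  have hi : i = 0 := by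
    by_contra hi
    simpa [hc] using hall 0 (Ne.symm hi)
  subst hi
  exact List.ext_getElem? fun j => by simpa using hall (j + 1) (by omega)

end OneStep

def AdjSwap {α : Type*} (l₁ l₂ : List α) : Prop :=
  ∃ L a b R, a ≠ b ∧ l₁ = L ++ a :: b :: R ∧ l₂ = L ++ b :: a :: R

lemma AdjSwap.perm {α : Type*} {l₁ l₂ : List α} (h : AdjSwap l₁ l₂) : l₁.Perm l₂ := by
  obtain ⟨L, a, b, R, -, rfl, rfl⟩ := h
  exact (List.Perm.swap b a R).append_left L

section Flip

variable {ι : Type*} [DecidableEq ι]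

def flipAt (x : ι → Bool) (i : ι) : ι → Bool := Function.update x i (!x i)

@[simp] lemma flipAt_self (x : ι → Bool) (i : ι) : flipAt x i i = !x i := by
  simp [flipAt]

lemma flipAt_of_ne (x : ι → Bool) {i j : ι} (h : j ≠ i) : flipAt x i j = x j :=
  Function.update_of_ne h _ _

lemma flipAt_flipAt_comm (x : ι → Bool) (i j : ι) :
    flipAt (flipAt x i) j = flipAt (flipAt x j) i := by
  funext k
  by_cases hki : k = i <;> by_cases hkj : k = j <;> simp_all [flipAt_of_ne]

@[simp] lemma flipAt_flipAt_self (x : ι → Bool) (i : ι) : flipAt (flipAt x i) i = x := by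
  funext j
  by_cases hji : j = i
  · subst hji; simp
  · simp [flipAt_of_ne _ hji]

lemma flipAt_injective (x : ι → Bool) : Function.Injective (flipAt x) := by
  intro i j h
  by_contra hij
  simpa [flipAt_of_ne x hij] using congrFun h i

lemma scanl_flipAt_inj {x y : ι → Bool} {l₁ l₂ : List ι} :
    l₁.scanl flipAt x = l₂.scanl flipAt y ↔ x = y ∧ l₁ = l₂ := by
  refine ⟨fun h => ?_, fun ⟨hxy, hl⟩ => hxy ▸ hl ▸ rfl⟩
  induction l₁ generalizing x y l₂ with
  | nil => cases l₂ <;> simp_all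
  | cons a l₁ ih =>
    obtain _ | ⟨b, l₂⟩ := l₂
    · simp at h
    simp only [List.scanl_cons, List.cons.injEq] at h
    obtain ⟨rfl, h⟩ := h
    obtain ⟨hab, rfl⟩ := ih h
    exact ⟨rfl, by rw [flipAt_injective x hab]⟩

variable {l₁ l₂ : List ι}

lemma AdjSwap.oneStep_scanl_flipAt (h : AdjSwap l₁ l₂) (x : ι → Bool) :
    OneStep (l₁.scanl flipAt x) (l₂.scanl flipAt x) := by
  obtain ⟨L, a, b, R, hab, rfl, rfl⟩ := h
  induction L generalizing x with
  | nil =>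
    simp only [List.nil_append, List.scanl_cons]
    rw [flipAt_flipAt_comm x b a]
    exact (OneStep.cons_of_ne ((flipAt_injective x).ne hab) _).cons x
  | cons c L ih =>
    simp only [List.cons_append, List.scanl_cons]
    exact (ih _).cons x

lemma adjSwap_of_oneStep_scanl_flipAt {x : ι → Bool} (hl : l₁.Perm l₂)
    (h : OneStep (l₁.scanl flipAt x) (l₂.scanl flipAt x)) : AdjSwap l₁ l₂ := by
  induction l₁ generalizing x l₂ with
  | nil =>
    rw [List.perm_nil.mp hl.symm] at h
    exact absurd h (OneStep.irrefl _)
  | cons a l₁ ih =>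
    obtain _ | ⟨a', l₂⟩ := l₂
    · exact absurd hl.length_eq (by simp)
    simp only [List.scanl_cons] at h
    by_cases haa' : a = a'
    · subst haa'
      obtain ⟨L, b, c, R, hbc, rfl, rfl⟩ := ih hl.cons_inv h.of_cons
      exact ⟨a :: L, b, c, R, hbc, rfl, rfl⟩
    -- `[a]` and `[a']` have supports differing in one place; the permutation rules them out.
    obtain _ | ⟨b, R⟩ := l₁ <;> obtain _ | ⟨b', R'⟩ := l₂
    · exact absurd (List.singleton_perm_singleton.mp hl) haa'
    · exact absurd hl.length_eq (by simp)
    · exact absurd hl.length_eq (by simp)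
    simp only [List.scanl_cons] at h
    obtain ⟨-, rfl⟩ :=
      scanl_flipAt_inj.mp (h.of_cons.tail_eq_of_ne ((flipAt_injective x).ne haa'))
    have hab : [a, b].Perm [a', b'] := List.perm_append_right_iff R |>.mp hl
    have ha : a = b' := by simpa [haa'] using hab.subset (List.mem_cons_self ..)
    have hb : a' = b := by simpa [Ne.symm haa'] using hab.symm.subset (List.mem_cons_self ..)
    subst ha hb
    exact ⟨[], a, a', R, haa', rfl, rfl⟩

variable [Fintype ι]

lemma hammingDist_self_flipAt (x : ι → Bool) (i : ι) : hammingDist x (flipAt x i) = 1 := by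
  refine Finset.card_eq_one.mpr ⟨i, Finset.ext fun j => ?_⟩
  by_cases hji : j = i <;> simp [hji, flipAt_of_ne]

lemma hammingDist_flipAt_add_one {x y : ι → Bool} {i : ι} (h : x i ≠ y i) :
    hammingDist (flipAt x i) y + 1 = hammingDist x y := by
  have hfilter : (Finset.univ.filter fun j => flipAt x i j ≠ y j)
      = (Finset.univ.filter fun j => x j ≠ y j).erase i := by
    ext j
    by_cases hji : j = i
    · subst hji; simpa using h
    · simp [hji, flipAt_of_ne]
  rw [hammingDist, hammingDist, hfilter]
  exact Finset.card_erase_add_one (by simpa using h)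

end Flip

lemma Equiv.swap_add_one_lt_swap_add_one_iff {n i j : ℕ} (h : ¬(i = n ∧ j = n + 1))
    (h' : ¬(i = n + 1 ∧ j = n)) :
    Equiv.swap n (n + 1) i < Equiv.swap n (n + 1) j ↔ i < j := by
  simp only [Equiv.swap_apply_def]
  split_ifs <;> omega

lemma nodup_append_cons_cons {α : Type*} {L R : List α} {a b : α}
    (hnd : (L ++ a :: b :: R).Nodup) : a ∉ L ∧ b ∉ L ∧ a ≠ b := by
  simp only [List.nodup_append, List.nodup_cons, List.mem_cons] at hnd
  grind

section Swap

variable {α : Type*} [BEq α] [LawfulBEq α] {L R : List α} {a b : α}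

lemma idxOf_append_cons_cons (ha : a ∉ L) (hb : b ∉ L) (hab : a ≠ b) :
    (L ++ a :: b :: R).idxOf a = L.length ∧ (L ++ a :: b :: R).idxOf b = L.length + 1 := by
  simp [List.idxOf_append_of_notMem, ha, hb, hab]

lemma idxOf_swap_adjacent (ha : a ∉ L) (hb : b ∉ L) (hab : a ≠ b) (c : α) :
    (L ++ b :: a :: R).idxOf c
      = Equiv.swap L.length (L.length + 1) ((L ++ a :: b :: R).idxOf c) := by
  by_cases hc : c ∈ L
  · have := List.idxOf_lt_length_iff.mpr hc
    rw [List.idxOf_append_of_mem hc, List.idxOf_append_of_mem hc,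
      Equiv.swap_apply_of_ne_of_ne (by omega) (by omega)]
  · rw [List.idxOf_append_of_notMem hc, List.idxOf_append_of_notMem hc]
    by_cases hca : c = a
    · subst hca
      simp [List.idxOf_cons_ne _ (Ne.symm hab)]
    by_cases hcb : c = b
    · subst hcb
      simp [List.idxOf_cons_ne _ hab]
    simp only [List.idxOf_cons_ne _ (Ne.symm hca), List.idxOf_cons_ne _ (Ne.symm hcb),
      Equiv.swap_apply_def]
    split_ifs <;> omega

lemma idxOf_lt_idxOf_swap_iff (hnd : (L ++ a :: b :: R).Nodup) {u v : α}
    (h : ¬(u = a ∧ v = b)) (h' : ¬(u = b ∧ v = a)) :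
    (L ++ b :: a :: R).idxOf u < (L ++ b :: a :: R).idxOf v
      ↔ (L ++ a :: b :: R).idxOf u < (L ++ a :: b :: R).idxOf v := by
  obtain ⟨ha, hb, hab⟩ := nodup_append_cons_cons hnd
  obtain ⟨hia, hib⟩ := idxOf_append_cons_cons (R := R) ha hb hab
  have hmem_a : a ∈ L ++ a :: b :: R := by simp
  have hmem_b : b ∈ L ++ a :: b :: R := by simp
  have hpos_a {c : α} (hc : (L ++ a :: b :: R).idxOf c = L.length) : c = a :=
    ((List.idxOf_inj hmem_a).mp (hia.trans hc.symm)).symm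
  have hpos_b {c : α} (hc : (L ++ a :: b :: R).idxOf c = L.length + 1) : c = b :=
    ((List.idxOf_inj hmem_b).mp (hib.trans hc.symm)).symm
  rw [idxOf_swap_adjacent ha hb hab, idxOf_swap_adjacent ha hb hab]
  exact Equiv.swap_add_one_lt_swap_add_one_iff (fun ⟨hu, hv⟩ => h ⟨hpos_a hu, hpos_b hv⟩)
    (fun ⟨hu, hv⟩ => h' ⟨hpos_b hu, hpos_a hv⟩)

end Swap

lemma exists_append_cons_cons_idxOf_lt {α : Type*} [BEq α] [LawfulBEq α] {l m : List α}
    (hl : l.Nodup) (hlm : l.Perm m) (hne : l ≠ m) :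
    ∃ L a b R, l = L ++ a :: b :: R ∧ m.idxOf b < m.idxOf a := by
  -- Otherwise `l`, like `m`, is sorted by position in `m`, and sorted permutations coincide.
  by_contra! h
  apply hne
  have hchain : (l.map m.idxOf).IsChain (· < ·) := by
    refine (List.isChain_map _).mpr (List.isChain_iff_forall_rel_of_append_cons_cons.mpr
      fun a b L R hl' => ?_)
    have hab := (nodup_append_cons_cons (hl' ▸ hl)).2.2
    have hidx : m.idxOf a ≠ m.idxOf b := fun h =>
      hab ((List.idxOf_inj (hlm.subset (by simp [hl']))).mp h)
    have := h L a b R hl'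
    omega
  refine List.Perm.eq_of_pairwise (le := fun x y => m.idxOf x < m.idxOf y)
    (fun _ _ _ _ h h' => absurd h' h.asymm) (List.pairwise_map.mp hchain.pairwise) ?_ hlm
  exact List.pairwise_iff_getElem.mpr fun i j hi hj hij => by
    simpa [(hlm.nodup_iff.mp hl).idxOf_getElem] using hij

namespace Finset

variable {α : Type*} [DecidableEq α] {s : Finset α} {P Q : α → Prop} [DecidablePred P]
  [DecidablePred Q] {q : α}

lemma card_filter_le_card_filter_add_one (h : ∀ x ∈ s, x ≠ q → P x → Q x) :
    (s.filter P).card ≤ (s.filter Q).card + 1 := by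
  refine (card_le_card fun x hx => ?_).trans (card_insert_le q _)
  rw [mem_filter] at hx
  by_cases hxq : x = q
  · simp [hxq]
  · simp [hx.1, h x hx.1 hxq hx.2]

lemma card_filter_eq_card_filter_add_one (hq : q ∈ s) (hPq : P q) (hQq : ¬Q q)
    (h : ∀ x ∈ s, x ≠ q → (P x ↔ Q x)) :
    (s.filter P).card = (s.filter Q).card + 1 := by
  rw [← card_insert_of_notMem (show q ∉ s.filter Q by simp [hQq])]
  congr 1
  ext x
  by_cases hxq : x = q
  · simp [hxq, hq, hPq]
  · by_cases hx : x ∈ s <;> simp [hxq, hx, h x]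

end Finset

section KendallTau

variable {d : ℕ}

def Discordant (l m : List (Fin d)) (p : Fin d × Fin d) : Prop :=
  p.1 < p.2 ∧ ¬((l.idxOf p.1 < l.idxOf p.2) ↔ (m.idxOf p.1 < m.idxOf p.2))

instance (l m : List (Fin d)) : DecidablePred (Discordant l m) :=
  fun _ => inferInstanceAs (Decidable (_ ∧ _))

lemma kendallTau_self (l : List (Fin d)) : kendallTau l l = 0 := by
  simp [kendallTau]

variable {L R : List (Fin d)} {a b : Fin d}

lemma discordant_swap_iff (hnd : (L ++ a :: b :: R).Nodup) (m : List (Fin d))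
    {p : Fin d × Fin d} (hp : p ≠ (min a b, max a b)) :
    Discordant (L ++ b :: a :: R) m p ↔ Discordant (L ++ a :: b :: R) m p := by
  unfold Discordant
  by_cases hlt : p.1 < p.2
  · have h : ¬(p.1 = a ∧ p.2 = b) := by
      rintro ⟨h1, h2⟩
      exact hp (Prod.ext (by simp [← h1, ← h2, hlt.le]) (by simp [← h1, ← h2, hlt.le]))
    have h' : ¬(p.1 = b ∧ p.2 = a) := by
      rintro ⟨h1, h2⟩
      exact hp (Prod.ext (by simp [← h1, ← h2, hlt.le]) (by simp [← h1, ← h2, hlt.le]))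
    rw [idxOf_lt_idxOf_swap_iff hnd h h']
  · simp [hlt]

lemma discordant_swap_of_idxOf_lt (hnd : (L ++ a :: b :: R).Nodup) {m : List (Fin d)}
    (hm : m.idxOf b < m.idxOf a) :
    Discordant (L ++ a :: b :: R) m (min a b, max a b) ∧
      ¬Discordant (L ++ b :: a :: R) m (min a b, max a b) := by
  obtain ⟨ha, hb, hab⟩ := nodup_append_cons_cons hnd
  obtain ⟨hia, hib⟩ := idxOf_append_cons_cons (R := R) ha hb hab
  obtain ⟨hib', hia'⟩ := idxOf_append_cons_cons (R := R) hb ha hab.symm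
  unfold Discordant
  rcases hab.lt_or_gt with h | h
  · simp [min_eq_left h.le, max_eq_right h.le, h, hia, hib, hia', hib', hm.not_gt]
  · simp [min_eq_right h.le, max_eq_left h.le, h, hia, hib, hia', hib', hm]

lemma AdjSwap.kendallTau_le {l l' : List (Fin d)} (h : AdjSwap l l') (hl : l.Nodup)
    (m : List (Fin d)) : kendallTau l m ≤ kendallTau l' m + 1 := by
  obtain ⟨L, a, b, R, -, rfl, rfl⟩ := h
  exact Finset.card_filter_le_card_filter_add_one (q := (min a b, max a b))
    fun p _ hp => (discordant_swap_iff hl m hp).mpr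

lemma kendallTau_swap_of_idxOf_lt {L R m : List (Fin d)} {a b : Fin d}
    (hnd : (L ++ a :: b :: R).Nodup) (hm : m.idxOf b < m.idxOf a) :
    kendallTau (L ++ a :: b :: R) m = kendallTau (L ++ b :: a :: R) m + 1 := by
  obtain ⟨hP, hQ⟩ := discordant_swap_of_idxOf_lt hnd hm
  exact Finset.card_filter_eq_card_filter_add_one (Finset.mem_univ _) hP hQ
    fun p _ hp => (discordant_swap_iff hnd m hp).symm

end KendallTau

section Cube

variable {d : ℕ}

lemma cube_adj_flipAt (x : Fin d → Bool) (i : Fin d) : (cube d).Adj x (flipAt x i) :=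
  hammingDist_self_flipAt x i

def edgeCoord {x z : Fin d → Bool} (h : (cube d).Adj x z) : Fin d :=
  (Finset.univ.filter fun i => x i ≠ z i).min'
    (Finset.card_pos.mp (Nat.one_pos.trans_eq (Eq.symm h)))

lemma flipSeq_cons {x y z : Fin d → Bool} (h : (cube d).Adj x z) (p : (cube d).Walk z y) :
    flipSeq (.cons h p) = edgeCoord h :: flipSeq p := rfl

lemma eq_flipAt_edgeCoord {x z : Fin d → Bool} (h : (cube d).Adj x z) :
    z = flipAt x (edgeCoord h) := by
  obtain ⟨i, hi⟩ := Finset.card_eq_one.mp (h : hammingDist x z = 1)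
  have hedge : edgeCoord h = i := by simp [edgeCoord, hi]
  have hmem (j : Fin d) : x j ≠ z j ↔ j = i := by
    simpa using congrArg (j ∈ ·) hi
  funext j
  rw [hedge]
  by_cases hji : j = i
  · subst hji
    rw [flipAt_self]
    have := (hmem j).mpr rfl
    revert this; cases x j <;> cases z j <;> simp
  · simpa [flipAt_of_ne _ hji, eq_comm] using (hmem j).not.mpr hji

lemma edgeCoord_flipAt (x : Fin d → Bool) (i : Fin d) : edgeCoord (cube_adj_flipAt x i) = i :=
  flipAt_injective x (eq_flipAt_edgeCoord (cube_adj_flipAt x i)).symm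

lemma support_eq_scanl_flipSeq {x y : Fin d → Bool} (p : (cube d).Walk x y) :
    p.support = (flipSeq p).scanl flipAt x := by
  induction p with
  | nil => rfl
  | cons h p ih => rw [SimpleGraph.Walk.support_cons, flipSeq_cons, List.scanl_cons, ih,
      ← eq_flipAt_edgeCoord h]

lemma foldl_flipSeq {x y : Fin d → Bool} (p : (cube d).Walk x y) :
    (flipSeq p).foldl flipAt x = y := by
  induction p with
  | nil => rfl
  | cons h p ih => rwa [flipSeq_cons, List.foldl_cons, ← eq_flipAt_edgeCoord h]

lemma flipSeq_injective {x y : Fin d → Bool} :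
    Function.Injective (flipSeq : (cube d).Walk x y → List (Fin d)) := fun p q h =>
  SimpleGraph.Walk.support_injective <| by
    rw [support_eq_scanl_flipSeq, support_eq_scanl_flipSeq, h]

@[simp] lemma length_flipSeq {x y : Fin d → Bool} (p : (cube d).Walk x y) :
    (flipSeq p).length = p.length := by
  induction p with
  | nil => rfl
  | cons h p ih => simp [flipSeq_cons, ih]

def walkOfFlips (x : Fin d → Bool) : (l : List (Fin d)) → (cube d).Walk x (l.foldl flipAt x)
  | [] => .nil
  | i :: l => .cons (cube_adj_flipAt x i) (walkOfFlips (flipAt x i) l)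

@[simp] lemma flipSeq_walkOfFlips (x : Fin d → Bool) (l : List (Fin d)) :
    flipSeq (walkOfFlips x l) = l := by
  induction l generalizing x with
  | nil => rfl
  | cons i l ih => exact congrArg₂ List.cons (edgeCoord_flipAt x i) (ih _)

@[simp] lemma flipSeq_copy {x y x' y' : Fin d → Bool} (p : (cube d).Walk x y) (hx : x = x')
    (hy : y = y') : flipSeq (p.copy hx hy) = flipSeq p := by
  subst hx hy; rfl

lemma hammingDist_le_length {x y : Fin d → Bool} (p : (cube d).Walk x y) :
    hammingDist x y ≤ p.length := by
  induction p with
  | nil => simp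
  | @cons x z y h p ih =>
    have hxz : hammingDist x z = 1 := h
    have := hammingDist_triangle x z y
    rw [SimpleGraph.Walk.length_cons]
    omega

lemma exists_walk_length_eq_hammingDist (x y : Fin d → Bool) :
    ∃ p : (cube d).Walk x y, p.length = hammingDist x y := by
  induction hn : hammingDist x y generalizing x with
  | zero =>
    obtain rfl := hammingDist_eq_zero.mp hn
    exact ⟨.nil, rfl⟩
  | succ n ih =>
    obtain ⟨i, hi⟩ : ∃ i, x i ≠ y i := by
      by_contra! h
      simp [funext h] at hn
    obtain ⟨p, hp⟩ := ih (flipAt x i) (by have := hammingDist_flipAt_add_one hi; omega)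
    exact ⟨.cons (cube_adj_flipAt x i) p, by simp [hp]⟩

lemma cube_dist (x y : Fin d → Bool) : (cube d).dist x y = hammingDist x y := by
  obtain ⟨p, hp⟩ := exists_walk_length_eq_hammingDist x y
  obtain ⟨q, hq⟩ := SimpleGraph.Reachable.exists_walk_length_eq_dist ⟨p⟩
  have := SimpleGraph.dist_le p
  have := hammingDist_le_length q
  omega

lemma nodup_flipSeq_and_mem_flipSeq_iff {x y : Fin d → Bool} (p : (cube d).Walk x y)
    (hp : p.length = hammingDist x y) :
    (flipSeq p).Nodup ∧ ∀ i, i ∈ flipSeq p ↔ x i ≠ y i := by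
  induction p with
  | nil => simp [flipSeq]
  | @cons x z y h p ih =>
    rw [SimpleGraph.Walk.length_cons] at hp
    rw [flipSeq_cons]
    set a := edgeCoord h
    have hz : z = flipAt x a := eq_flipAt_edgeCoord h
    have hle := hammingDist_le_length p
    have htri := hammingDist_triangle x z y
    have hxz : hammingDist x z = 1 := h
    have hza : z a = y a := by
      by_contra hza
      have := hammingDist_flipAt_add_one hza
      rw [hz, flipAt_flipAt_self, ← hz] at this
      omega
    obtain ⟨hnd, hmem⟩ := ih (by omega)
    refine ⟨List.nodup_cons.mpr ⟨by simp [hmem, hza], hnd⟩, fun i => ?_⟩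
    by_cases hia : i = a
    · subst hia
      simp [← hza, hz]
    · simp [hia, hmem, hz, flipAt_of_ne _ hia]

variable {s t : Fin d → Bool}

lemma nodup_flipSeq_of_length_eq_dist {p : (cube d).Walk s t}
    (hp : p.length = (cube d).dist s t) : (flipSeq p).Nodup :=
  (nodup_flipSeq_and_mem_flipSeq_iff p (hp.trans (cube_dist s t))).1

lemma flipSeq_perm_of_length_eq_dist {p q : (cube d).Walk s t}
    (hp : p.length = (cube d).dist s t) (hq : q.length = (cube d).dist s t) :
    (flipSeq p).Perm (flipSeq q) := by
  obtain ⟨hnp, hmp⟩ := nodup_flipSeq_and_mem_flipSeq_iff p (hp.trans (cube_dist s t))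
  obtain ⟨hnq, hmq⟩ := nodup_flipSeq_and_mem_flipSeq_iff q (hq.trans (cube_dist s t))
  exact (List.perm_ext_iff_of_nodup hnp hnq).mpr fun i => (hmp i).trans (hmq i).symm

lemma ShortestStep.adjSwap_flipSeq {p q : (cube d).Walk s t}
    (h : ShortestStep (cube d) s t p q) : AdjSwap (flipSeq p) (flipSeq q) := by
  refine adjSwap_of_oneStep_scanl_flipAt (x := s) (flipSeq_perm_of_length_eq_dist h.1 h.2.1) ?_
  rw [← support_eq_scanl_flipSeq, ← support_eq_scanl_flipSeq]
  exact h.2.2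

lemma exists_shortestStep_flipSeq_eq {p : (cube d).Walk s t}
    (hp : p.length = (cube d).dist s t) {l : List (Fin d)} (h : AdjSwap (flipSeq p) l) :
    ∃ q, ShortestStep (cube d) s t p q ∧ flipSeq q = l := by
  have hend : l.foldl flipAt s = t := by
    rw [← h.perm.foldl_eq' (fun _ _ _ _ x => flipAt_flipAt_comm x _ _), foldl_flipSeq]
  refine ⟨(walkOfFlips s l).copy rfl hend, ⟨hp, ?_, ?_⟩, by simp⟩
  · rw [← length_flipSeq, flipSeq_copy, flipSeq_walkOfFlips, ← h.perm.length_eq,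
      length_flipSeq, hp]
  · rw [support_eq_scanl_flipSeq, support_eq_scanl_flipSeq, flipSeq_copy, flipSeq_walkOfFlips]
    exact h.oneStep_scanl_flipAt s

lemma ShortestStep.kendallTau_flipSeq_le {p q : (cube d).Walk s t}
    (h : ShortestStep (cube d) s t p q) (m : List (Fin d)) :
    kendallTau (flipSeq p) m ≤ kendallTau (flipSeq q) m + 1 :=
  h.adjSwap_flipSeq.kendallTau_le (nodup_flipSeq_of_length_eq_dist h.1) m

lemma exists_shortestStep_kendallTau_flipSeq_eq_add_one {p Q : (cube d).Walk s t}
    (hp : p.length = (cube d).dist s t) (hQ : Q.length = (cube d).dist s t) (hne : p ≠ Q) :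
    ∃ q, ShortestStep (cube d) s t p q ∧
      kendallTau (flipSeq p) (flipSeq Q) = kendallTau (flipSeq q) (flipSeq Q) + 1 := by
  have hnd := nodup_flipSeq_of_length_eq_dist hp
  obtain ⟨L, a, b, R, hl, hlt⟩ := exists_append_cons_cons_idxOf_lt hnd
    (flipSeq_perm_of_length_eq_dist hp hQ) (flipSeq_injective.ne hne)
  rw [hl] at hnd
  obtain ⟨q, hpq, hq⟩ := exists_shortestStep_flipSeq_eq hp
    ⟨L, a, b, R, (nodup_append_cons_cons hnd).2.2, hl, rfl⟩
  exact ⟨q, hpq, by rw [hl, hq, kendallTau_swap_of_idxOf_lt hnd hlt]⟩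

end Cube

/-- Any two `s`–`t` shortest paths in the Boolean hypercube are reconfigurable, and
the minimum number of reconfiguration steps equals the Kendall tau distance between
their flip sequences. -/
theorem cube_reconfigurable_kendallTau {d : ℕ} (s t : Fin d → Bool)
    (P₁ P₂ : (cube d).Walk s t)
    (h₁ : P₁.length = (cube d).dist s t) (h₂ : P₂.length = (cube d).dist s t) :
    Reconfigurable (cube d) s t P₁ P₂ ∧
      reconfDist (cube d) s t P₁ P₂ = kendallTau (flipSeq P₁) (flipSeq P₂) :=
  SimpleGraph.reconfigurable_and_reconfDist_eq_of_potential
    (fun p => kendallTau (flipSeq p) (flipSeq P₂)) h₁ (kendallTau_self _)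
    (fun _ _ h => h.kendallTau_flipSeq_le _)
    (fun _ hp hne => exists_shortestStep_kendallTau_flipSeq_eq_add_one hp h₂ hne)
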